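/- arXiv:1812.03499 — 4 statements merged into one kernel-verified Lean document; each statement's English description precedes it below -/
import Mathlib

section
/- Let x, y be nonzero vectors in a Hilbert space and T = x ⊗ y. Then the n-th mean transform iterate is T̂^{(n)} = (1/2ⁿ)(x + (2ⁿ − 1)(⟨x,y⟩/‖y‖²) y) ⊗ y, and consequently T̂^{(n)} converges in norm to the operator (⟨x,y⟩/‖y‖²)(y ⊗ y), with mean limit ℓ(T) = |⟨x,y⟩| = r(T). -/
/-!
Let `T = x ⊗ y` with `x, y ≠ 0`. Then `T* T = ‖x‖² (y ⊗ y)`, whose unique positive square root is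
`R = (‖x‖ / ‖y‖) (y ⊗ y)`; since `ker V = ker T = y^⊥`, the partial isometry of any polar
decomposition factors through the projection onto `ℂ y`, which forces `V = T / (‖x‖ ‖y‖)`. Hence
the mean transform of `x ⊗ y` is `½ (x + p) ⊗ y`, where `p = (⟪y, x⟫ / ‖y‖²) y` is the orthogonal
projection of `x` onto `ℂ y`. This step does not change `⟪y, x⟫`, so the `n`-th iterate is
`(p + 2⁻ⁿ (x - p)) ⊗ y`, which tends to `p ⊗ y`, an operator of norm `|⟪y, x⟫|`.
Finally `T² = ⟪y, x⟫ T` confines the spectrum to `{0, ⟪y, x⟫}`, and `x` is an eigenvector for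
`⟪y, x⟫`.
-/

open ContinuousLinearMap Filter Topology

structure PolarDecomp {H : Type*} [NormedAddCommGroup H] [InnerProductSpace ℂ H]
    [CompleteSpace H] (T : H →L[ℂ] H) where
  V : H →L[ℂ] H
  R : H →L[ℂ] H
  posR : R.IsPositive
  sqR : R * R = adjoint T * T
  partIso : V * adjoint V * V = V
  kerV : LinearMap.ker (V : H →ₗ[ℂ] H) = LinearMap.ker (T : H →ₗ[ℂ] H)
  factor : T = V * R

noncomputable def PolarDecomp.mean {H : Type*} [NormedAddCommGroup H] [InnerProductSpace ℂ H]
    [CompleteSpace H] {T : H →L[ℂ] H} (P : PolarDecomp T) : H →L[ℂ] H :=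
  (2⁻¹ : ℂ) • (P.V * P.R + P.R * P.V)


open scoped Classical in
noncomputable def meanTransform {H : Type*} [NormedAddCommGroup H] [InnerProductSpace ℂ H]
    [CompleteSpace H] (T : H →L[ℂ] H) : H →L[ℂ] H :=
  if h : Nonempty (PolarDecomp T) then h.some.mean else 0


noncomputable def rankOne {H : Type*} [NormedAddCommGroup H] [InnerProductSpace ℂ H]
    (x y : H) : H →L[ℂ] H :=
  (ContinuousLinearMap.toSpanSingleton ℂ x).comp (innerSL ℂ y)

open scoped InnerProductSpace ComplexOrder

section

variable {H : Type*} [NormedAddCommGroup H] [InnerProductSpace ℂ H]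

theorem rankOne_eq_rankOne (x y : H) : rankOne x y = InnerProductSpace.rankOne ℂ x y := rfl

theorem inner_self_eq_ofReal_norm_sq (y : H) : ⟪y, y⟫_ℂ = (‖y‖ : ℂ) ^ 2 :=
  inner_self_eq_norm_sq_to_K y

theorem inner_div_norm_sq_smul_self (x y : H) :
    ⟪y, (⟪y, x⟫_ℂ / (‖y‖ : ℂ) ^ 2) • y⟫_ℂ = ⟪y, x⟫_ℂ := by
  rcases eq_or_ne y 0 with rfl | hy
  · simp
  have : (‖y‖ : ℂ) ≠ 0 := by simpa using hy
  rw [inner_smul_right, inner_self_eq_ofReal_norm_sq]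
  field_simp

open InnerProductSpace in
theorem norm_rankOne_div_norm_sq_smul (x y : H) :
    ‖rankOne ℂ ((⟪y, x⟫_ℂ / (‖y‖ : ℂ) ^ 2) • y) y‖ = ‖⟪y, x⟫_ℂ‖ := by
  rcases eq_or_ne y 0 with rfl | hy
  · simp
  have : ‖y‖ ≠ 0 := norm_ne_zero_iff.2 hy
  rw [norm_rankOne, norm_smul, norm_div, norm_pow, Complex.norm_real, norm_norm]
  field_simp

end

theorem ContinuousLinearMap.mul_eq_self_of_ker_le {R M : Type*} [Ring R] [TopologicalSpace M]
    [AddCommGroup M] [Module R M] {V T Q : M →L[R] M}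
    (hker : LinearMap.ker (T : M →ₗ[R] M) ≤ LinearMap.ker (V : M →ₗ[R] M)) (hQ : T * Q = T) :
    V * Q = V := by
  ext u
  have hT : u - Q u ∈ LinearMap.ker (T : M →ₗ[R] M) := by
    simpa [sub_eq_zero] using congr($hQ u).symm
  have hV := hker hT
  rw [LinearMap.mem_ker, map_sub, sub_eq_zero] at hV
  exact hV.symm

open Polynomial in
theorem spectrum_subset_of_mul_self_eq_smul {𝕜 A : Type*} [Field 𝕜] [Ring A] [Algebra 𝕜 A]
    {a : A} {μ : 𝕜} (h : a * a = μ • a) : spectrum 𝕜 a ⊆ {0, μ} := by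
  intro k hk
  have hzero : aeval a (X * (X - C μ)) = 0 := by
    simp [mul_sub, h, Algebra.smul_def, Algebra.commutes]
  have hk' := spectrum.subset_polynomial_aeval a (X * (X - C μ)) ⟨k, hk, rfl⟩
  rw [hzero, spectrum.mem_iff, sub_zero] at hk'
  have hroot : k * (k - μ) = 0 := by
    by_contra hne
    exact hk' (by simpa using (Units.mk0 _ hne).isUnit.map (algebraMap 𝕜 A))
  simpa [sub_eq_zero] using hroot

namespace PolarDecomp

variable {H : Type*} [NormedAddCommGroup H] [InnerProductSpace ℂ H] [CompleteSpace H]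
  {T : H →L[ℂ] H}

theorem R_eq_sqrt (P : PolarDecomp T) : P.R = CFC.sqrt (adjoint T * T) :=
  (CFC.sqrt_unique P.sqR ((nonneg_iff_isPositive P.R).2 P.posR)).symm

theorem mean_eq (P : PolarDecomp T) : P.mean = (2⁻¹ : ℂ) • (T + P.R * P.V) := by
  rw [mean, ← P.factor]

end PolarDecomp

section

open InnerProductSpace

variable {H : Type*} [NormedAddCommGroup H] [InnerProductSpace ℂ H] [CompleteSpace H]

theorem meanTransform_zero : meanTransform (0 : H →L[ℂ] H) = 0 := by
  rw [meanTransform]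
  split_ifs with h
  · rw [h.some.mean_eq, h.some.R_eq_sqrt]
    simp
  · rfl

noncomputable def rankOnePolarDecomp {x y : H} (hx : x ≠ 0) (hy : y ≠ 0) :
    PolarDecomp (rankOne ℂ x y) where
  V := ((‖x‖ * ‖y‖ : ℝ) : ℂ)⁻¹ • rankOne ℂ x y
  R := ((‖x‖ / ‖y‖ : ℝ) : ℂ) • rankOne ℂ y y
  posR := (isPositive_rankOne_self y).smul_of_nonneg (by norm_cast; positivity)
  sqR := by
    have : ‖y‖ ≠ 0 := norm_ne_zero_iff.2 hy
    simp only [adjoint_rankOne, mul_def, smul_comp, comp_smul, rankOne_comp_rankOne, smul_smul,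
      inner_self_eq_ofReal_norm_sq]
    congr 1
    push_cast
    field_simp
  partIso := by
    have : ‖x‖ ≠ 0 := norm_ne_zero_iff.2 hx
    have : ‖y‖ ≠ 0 := norm_ne_zero_iff.2 hy
    simp only [map_smulₛₗ, Complex.conj_ofReal, adjoint_rankOne, mul_def, smul_comp, comp_smul,
      rankOne_comp_rankOne, smul_smul, inner_self_eq_ofReal_norm_sq, map_inv₀]
    congr 1
    push_cast
    field_simp
  kerV := by
    rw [toLinearMap_smul, LinearMap.ker_smul]
    norm_cast
    positivity
  factor := by
    have : ‖x‖ ≠ 0 := norm_ne_zero_iff.2 hx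
    have : ‖y‖ ≠ 0 := norm_ne_zero_iff.2 hy
    simp only [mul_def, smul_comp, comp_smul, rankOne_comp_rankOne, smul_smul,
      inner_self_eq_ofReal_norm_sq]
    rw [eq_comm, ← one_smul ℂ (rankOne ℂ x y), smul_smul]
    congr 1
    push_cast
    field_simp

theorem PolarDecomp.R_rankOne {x y : H} (hx : x ≠ 0) (hy : y ≠ 0)
    (P : PolarDecomp (rankOne ℂ x y)) : P.R = ((‖x‖ / ‖y‖ : ℝ) : ℂ) • rankOne ℂ y y := by
  rw [P.R_eq_sqrt, ← (rankOnePolarDecomp hx hy).R_eq_sqrt]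
  rfl

theorem PolarDecomp.V_rankOne {x y : H} (hx : x ≠ 0) (hy : y ≠ 0)
    (P : PolarDecomp (rankOne ℂ x y)) : P.V = ((‖x‖ * ‖y‖ : ℝ) : ℂ)⁻¹ • rankOne ℂ x y := by
  have : ‖x‖ ≠ 0 := norm_ne_zero_iff.2 hx
  have : ‖y‖ ≠ 0 := norm_ne_zero_iff.2 hy
  have hproj : P.V * (((‖y‖ ^ 2 : ℝ) : ℂ)⁻¹ • rankOne ℂ y y) = P.V := by
    refine mul_eq_self_of_ker_le P.kerV.ge ?_
    rw [mul_smul_comm, mul_def, rankOne_comp_rankOne, smul_smul, inner_self_eq_ofReal_norm_sq]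
    conv_rhs => rw [← one_smul ℂ (rankOne ℂ x y)]
    congr 1
    push_cast
    field_simp
  have hVy : rankOne ℂ (P.V y) y = ((‖y‖ / ‖x‖ : ℝ) : ℂ) • rankOne ℂ x y := by
    conv_rhs => rw [P.factor, P.R_rankOne hx hy, mul_smul_comm, mul_def, comp_rankOne, smul_smul]
    conv_lhs => rw [← one_smul ℂ (rankOne ℂ (P.V y) y)]
    congr 1
    push_cast
    field_simp
  rw [← hproj, mul_smul_comm, mul_def, comp_rankOne, hVy, smul_smul]
  congr 1
  push_cast
  field_simp

theorem meanTransform_rankOne (x y : H) :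
    meanTransform (rankOne ℂ x y) =
      rankOne ℂ ((2⁻¹ : ℂ) • (x + (⟪y, x⟫_ℂ / (‖y‖ : ℂ) ^ 2) • y)) y := by
  rcases eq_or_ne x 0 with rfl | hx
  · simp [meanTransform_zero]
  rcases eq_or_ne y 0 with rfl | hy
  · simp [meanTransform_zero]
  have : ‖x‖ ≠ 0 := norm_ne_zero_iff.2 hx
  have : ‖y‖ ≠ 0 := norm_ne_zero_iff.2 hy
  rw [meanTransform, dif_pos ⟨rankOnePolarDecomp hx hy⟩, PolarDecomp.mean_eq,
    PolarDecomp.R_rankOne hx hy, PolarDecomp.V_rankOne hx hy]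
  rw [smul_mul_smul_comm, mul_def, rankOne_comp_rankOne, smul_smul, map_smul, map_add, map_smul,
    _root_.smul_apply]
  congr 3
  push_cast
  field_simp

theorem meanTransform_iterate_rankOne (x y : H) (n : ℕ) :
    meanTransform^[n] (rankOne ℂ x y) =
      rankOne ℂ ((⟪y, x⟫_ℂ / (‖y‖ : ℂ) ^ 2) • y +
        ((2 : ℂ) ^ n)⁻¹ • (x - (⟪y, x⟫_ℂ / (‖y‖ : ℂ) ^ 2) • y)) y := by
  induction n with
  | zero => simp
  | succ n ih =>
    have hinner : ⟪y, (⟪y, x⟫_ℂ / (‖y‖ : ℂ) ^ 2) • y +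
        ((2 : ℂ) ^ n)⁻¹ • (x - (⟪y, x⟫_ℂ / (‖y‖ : ℂ) ^ 2) • y)⟫_ℂ = ⟪y, x⟫_ℂ := by
      rw [inner_add_right, inner_div_norm_sq_smul_self, inner_smul_right, inner_sub_right,
        inner_div_norm_sq_smul_self, sub_self, mul_zero, add_zero]
    rw [Function.iterate_succ_apply', ih, meanTransform_rankOne, hinner]
    congr 2
    rw [pow_succ (2 : ℂ) n, mul_inv]
    module

theorem tendsto_meanTransform_iterate_rankOne (x y : H) :
    Tendsto (fun n : ℕ => meanTransform^[n] (rankOne ℂ x y)) atTop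
      (𝓝 (rankOne ℂ ((⟪y, x⟫_ℂ / (‖y‖ : ℂ) ^ 2) • y) y)) := by
  simp_rw [meanTransform_iterate_rankOne, ← inv_pow]
  have hpow : Tendsto (fun n : ℕ => (2⁻¹ : ℂ) ^ n) atTop (𝓝 0) :=
    tendsto_pow_atTop_nhds_zero_of_norm_lt_one (by norm_num)
  have hvec := (hpow.smul_const (x - (⟪y, x⟫_ℂ / (‖y‖ : ℂ) ^ 2) • y)).const_add
    ((⟪y, x⟫_ℂ / (‖y‖ : ℂ) ^ 2) • y)
  have hcont : Continuous fun v : H => rankOne ℂ v y := by fun_prop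
  simpa only [Function.comp_def, zero_smul, add_zero] using (hcont.tendsto _).comp hvec

theorem mem_spectrum_rankOne {x : H} (hx : x ≠ 0) (y : H) :
    ⟪y, x⟫_ℂ ∈ spectrum ℂ (rankOne ℂ x y) := by
  rw [ContinuousLinearMap.spectrum_eq]
  exact Module.End.HasEigenvalue.mem_spectrum
    (Module.End.hasEigenvalue_of_hasEigenvector ⟨Module.End.mem_eigenspace_iff.2 rfl, hx⟩)

theorem spectralRadius_rankOne (x y : H) :
    spectralRadius ℂ (rankOne ℂ x y) = ‖⟪y, x⟫_ℂ‖₊ := by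
  have hsub : spectrum ℂ (rankOne ℂ x y) ⊆ {0, ⟪y, x⟫_ℂ} :=
    spectrum_subset_of_mul_self_eq_smul (by rw [mul_def, rankOne_comp_rankOne])
  refine le_antisymm (iSup₂_le fun k hk => ?_) ?_
  · rcases hsub hk with rfl | rfl <;> simp
  · rcases eq_or_ne ⟪y, x⟫_ℂ 0 with h | h
    · simp [h]
    · exact le_iSup₂ (f := fun k _ => (‖k‖₊ : ENNReal)) _
        (mem_spectrum_rankOne (by rintro rfl; simp at h) y)

end

theorem mean_iterates_rank_one_general {H : Type*} [NormedAddCommGroup H] [InnerProductSpace ℂ H]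
    [CompleteSpace H] (x y : H) :
    (∀ n : ℕ, meanTransform^[n] (rankOne x y) =
      rankOne (((2 : ℂ) ^ n)⁻¹ •
        (x + (((2 : ℂ) ^ n - 1) * ((inner ℂ y x : ℂ) / (‖y‖ : ℂ) ^ 2)) • y)) y) ∧
    Tendsto (fun n : ℕ => meanTransform^[n] (rankOne x y)) atTop
      (nhds (rankOne (((inner ℂ y x : ℂ) / (‖y‖ : ℂ) ^ 2) • y) y)) ∧
    Tendsto (fun n : ℕ => ‖meanTransform^[n] (rankOne x y)‖) atTop
      (nhds (‖(inner ℂ y x : ℂ)‖)) ∧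
    spectralRadius ℂ (rankOne x y) = ENNReal.ofReal (‖(inner ℂ y x : ℂ)‖) := by
  simp only [rankOne_eq_rankOne]
  refine ⟨fun n => ?_, tendsto_meanTransform_iterate_rankOne x y, ?_, ?_⟩
  · rw [meanTransform_iterate_rankOne]
    have : (2 : ℂ) ^ n ≠ 0 := pow_ne_zero n two_ne_zero
    congr 2
    match_scalars <;> field_simp
    ring
  · rw [← norm_rankOne_div_norm_sq_smul]
    exact (tendsto_meanTransform_iterate_rankOne x y).norm
  · rw [spectralRadius_rankOne, ofReal_norm]
    rfl

theorem mean_iterates_rank_one {H : Type*} [NormedAddCommGroup H] [InnerProductSpace ℂ H]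
    [CompleteSpace H] (x y : H) (hx : x ≠ 0) (hy : y ≠ 0) :
    (∀ n : ℕ, meanTransform^[n] (rankOne x y) =
      rankOne (((2 : ℂ) ^ n)⁻¹ •
        (x + (((2 : ℂ) ^ n - 1) * ((inner ℂ y x : ℂ) / (‖y‖ : ℂ) ^ 2)) • y)) y) ∧
    Tendsto (fun n : ℕ => meanTransform^[n] (rankOne x y)) atTop
      (nhds (rankOne (((inner ℂ y x : ℂ) / (‖y‖ : ℂ) ^ 2) • y) y)) ∧
    Tendsto (fun n : ℕ => ‖meanTransform^[n] (rankOne x y)‖) atTop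
      (nhds (‖(inner ℂ y x : ℂ)‖)) ∧
    spectralRadius ℂ (rankOne x y) = ENNReal.ofReal (‖(inner ℂ y x : ℂ)‖) :=
  mean_iterates_rank_one_general x y
end

section
/- Let T ∈ B(H) with canonical polar decomposition T = V|T|. The following are equivalent: (1) N(T*) ⊆ N(T); (2) VV*|T| = |T|VV* = |T|; (3) V* is quasinormal, i.e., V V* V* = V*. -/
/-!
Everything is read off kernels. From `T* = |T| V*`, `ker |T| = ker T = ker V` and `V* = V* V V*` one
gets `ker T* = ker V* = ker (V V*)`. For the orthogonal projection `E = V V*` and any operator `A`,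
`A E = A` holds iff `ker E ⊆ ker A`. Condition (2) is `|T| E = |T|` together with its adjoint, and
condition (3) is the adjoint of `V E = V`; both therefore say `ker T* ⊆ ker T`.
-/

open ContinuousLinearMap Filter Topology

theorem isIdempotentElem_mul_of_mul_mul_self {M : Type*} [Semigroup M] {a b : M}
    (h : a * b * a = a) : IsIdempotentElem (a * b) := by
  rw [IsIdempotentElem, ← mul_assoc, h]

namespace ContinuousLinearMap

theorem comp_eq_self_iff_ker_le {R M N : Type*} [Ring R] [TopologicalSpace M] [AddCommGroup M]
    [Module R M] [TopologicalSpace N] [AddCommGroup N] [Module R N] {P : M →L[R] M}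
    (hP : IsIdempotentElem P) (A : M →L[R] N) :
    A ∘L P = A ↔ LinearMap.ker (P : M →ₗ[R] M) ≤ LinearMap.ker (A : M →ₗ[R] N) := by
  refine ⟨fun h x hx => ?_, fun h => ?_⟩
  · rw [LinearMap.mem_ker] at hx ⊢
    rw [← h]
    simpa using congrArg A hx
  · ext x
    have hPP : P (P x) = P x := congrArg (fun f => f x) hP.eq
    have hPx : x - P x ∈ LinearMap.ker (P : M →ₗ[R] M) := by
      simp [LinearMap.mem_ker, hPP]
    have hAx : A x - A (P x) = 0 := by simpa using h hPx
    exact (sub_eq_zero.mp hAx).symm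

theorem ker_eq_of_adjoint_comp_self_eq {𝕜 E F : Type*} [RCLike 𝕜] [NormedAddCommGroup E]
    [InnerProductSpace 𝕜 E] [CompleteSpace E] [NormedAddCommGroup F] [InnerProductSpace 𝕜 F]
    [CompleteSpace F] {A B : E →L[𝕜] F} (h : adjoint A ∘L A = adjoint B ∘L B) :
    LinearMap.ker (A : E →ₗ[𝕜] F) = LinearMap.ker (B : E →ₗ[𝕜] F) := by
  rw [← ker_adjoint_comp_self A, h, ker_adjoint_comp_self]

end ContinuousLinearMap

namespace PolarDecomp

variable {H : Type*} [NormedAddCommGroup H] [InnerProductSpace ℂ H] [CompleteSpace H]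
  {T : H →L[ℂ] H} (P : PolarDecomp T)

theorem adjoint_R : adjoint P.R = P.R := P.posR.isSelfAdjoint.adjoint_eq

theorem ker_R : LinearMap.ker (P.R : H →ₗ[ℂ] H) = LinearMap.ker (T : H →ₗ[ℂ] H) :=
  ker_eq_of_adjoint_comp_self_eq <| by rw [P.adjoint_R, ← mul_def, P.sqR, mul_def]

theorem ker_adjoint :
    LinearMap.ker (adjoint T : H →ₗ[ℂ] H) = LinearMap.ker (adjoint P.V : H →ₗ[ℂ] H) := by
  have hT : adjoint T = P.R ∘L adjoint P.V := by
    conv_lhs => rw [P.factor, mul_def, adjoint_comp, P.adjoint_R]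
  rw [hT, toLinearMap_comp, LinearMap.ker_comp, P.ker_R, ← P.kerV, ← LinearMap.ker_comp,
    ← toLinearMap_comp, ker_self_comp_adjoint]

end PolarDecomp

theorem ker_adjoint_subset_tfae {H : Type*} [NormedAddCommGroup H] [InnerProductSpace ℂ H]
    [CompleteSpace H] (T : H →L[ℂ] H) (P : PolarDecomp T) :
    ((LinearMap.ker (adjoint T : H →ₗ[ℂ] H) ≤ LinearMap.ker (T : H →ₗ[ℂ] H)) ↔
      (P.V * adjoint P.V * P.R = P.R ∧ P.R * (P.V * adjoint P.V) = P.R)) ∧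
    ((LinearMap.ker (adjoint T : H →ₗ[ℂ] H) ≤ LinearMap.ker (T : H →ₗ[ℂ] H)) ↔
      (P.V * adjoint P.V * adjoint P.V = adjoint P.V)) := by
  have hE_sa : IsSelfAdjoint (P.V * adjoint P.V) := by
    rw [← star_eq_adjoint]; exact IsSelfAdjoint.mul_star_self P.V
  have hE_ker : LinearMap.ker (adjoint T : H →ₗ[ℂ] H) =
      LinearMap.ker ((P.V * adjoint P.V : H →L[ℂ] H) : H →ₗ[ℂ] H) := by
    rw [P.ker_adjoint, mul_def, ker_self_comp_adjoint]
  have hcomp (A : H →L[ℂ] H) : A * (P.V * adjoint P.V) = A ↔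
      LinearMap.ker ((P.V * adjoint P.V : H →L[ℂ] H) : H →ₗ[ℂ] H) ≤ LinearMap.ker (A : H →ₗ[ℂ] H) :=
    comp_eq_self_iff_ker_le (isIdempotentElem_mul_of_mul_mul_self P.partIso) A
  have h2 : P.V * adjoint P.V * P.R = P.R ↔ P.R * (P.V * adjoint P.V) = P.R := by
    rw [← star_inj, star_mul, P.posR.isSelfAdjoint.star_eq, hE_sa.star_eq]
  have h3 : P.V * adjoint P.V * adjoint P.V = adjoint P.V ↔ P.V * (P.V * adjoint P.V) = P.V := by
    rw [← star_inj, star_mul, hE_sa.star_eq, star_eq_adjoint, adjoint_adjoint]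
  rw [h2, and_self, h3, hcomp, hcomp, hE_ker, P.ker_R, P.kerV]
  exact ⟨.rfl, .rfl⟩
end

section
/- For any bounded operator T on a Hilbert space, the closure of the numerical range of the mean transform T̂ is contained in the closure of the numerical range of T; in particular the numerical radius satisfies w(T̂) ≤ w(T). -/
open ContinuousLinearMap Filter Topology

def numRange {H : Type*} [NormedAddCommGroup H] [InnerProductSpace ℂ H]
    (T : H →L[ℂ] H) : Set ℂ :=
  {z : ℂ | ∃ x : H, ‖x‖ = 1 ∧ (inner ℂ x (T x) : ℂ) = z}

/-!
The closure of a numerical range is the intersection of the discs `‖μ - λ‖ ≤ ‖T - λ • 1‖`: one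
inclusion is Cauchy–Schwarz; for the other, `closure (numRange T)` is convex
(Toeplitz–Hausdorff), so a point outside it is separated from it by a line, and a disc centred far
behind that line contains `numRange T` but not the point.

For `T = V R`, the operator `R V - λ` equals `V* (T - λ) V + (T - λ) (1 - V* V)`, a sum of two
terms with orthogonal ranges acting on the orthogonal pieces `V* V x` and `x - V* V x`; hence
`‖R V - λ‖ ≤ ‖T - λ‖`, and averaging with `T - λ` gives `‖T̂ - λ‖ ≤ ‖T - λ‖`. So the numerical
range of `T̂` lies in every disc of `T`.
-/

open Set
open scoped InnerProductSpace ComplexConjugate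

theorem norm_add_smul_sq {𝕜 E : Type*} [RCLike 𝕜] [NormedAddCommGroup E] [InnerProductSpace 𝕜 E]
    (a : E) {x : E} (hx : ‖x‖ = 1) (c : 𝕜) :
    ‖a + c • x‖ ^ 2 = ‖a‖ ^ 2 + 2 * RCLike.re (c * inner 𝕜 a x) + ‖c‖ ^ 2 := by
  rw [norm_add_sq (𝕜 := 𝕜), inner_smul_right, norm_smul, hx, mul_one]

section NumericalRange

variable {H : Type*} [NormedAddCommGroup H] [InnerProductSpace ℂ H]

theorem numRange_smul (c : ℂ) (T : H →L[ℂ] H) :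
    numRange (c • T) = (c * ·) '' numRange T := by
  ext z
  constructor
  · rintro ⟨x, hx, rfl⟩
    exact ⟨_, ⟨x, hx, rfl⟩, (inner_smul_right _ _ _).symm⟩
  · rintro ⟨_, ⟨x, hx, rfl⟩, rfl⟩
    exact ⟨x, hx, inner_smul_right _ _ _⟩

theorem inner_apply_sub_smul_one (T : H →L[ℂ] H) (l : ℂ) {x : H} (hx : ‖x‖ = 1) :
    ⟪x, (T - l • 1) x⟫_ℂ = ⟪x, T x⟫_ℂ - l := by
  simp [inner_self_eq_norm_sq_to_K, hx]

theorem numRange_sub_smul_one (l : ℂ) (T : H →L[ℂ] H) :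
    numRange (T - l • 1) = (· - l) '' numRange T := by
  ext z
  constructor
  · rintro ⟨x, hx, rfl⟩
    exact ⟨_, ⟨x, hx, rfl⟩, (inner_apply_sub_smul_one T l hx).symm⟩
  · rintro ⟨_, ⟨x, hx, rfl⟩, rfl⟩
    exact ⟨x, hx, inner_apply_sub_smul_one T l hx⟩

theorem norm_le_of_mem_numRange {T : H →L[ℂ] H} {z : ℂ} (hz : z ∈ numRange T) : ‖z‖ ≤ ‖T‖ := by
  obtain ⟨x, hx, rfl⟩ := hz
  simpa [hx] using (norm_inner_le_norm x (T x)).trans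
    (mul_le_mul_of_nonneg_left (T.le_opNorm x) (norm_nonneg x))

theorem norm_sub_le_of_mem_numRange {T : H →L[ℂ] H} {z : ℂ} (hz : z ∈ numRange T) (l : ℂ) :
    ‖z - l‖ ≤ ‖T - l • 1‖ :=
  norm_le_of_mem_numRange (numRange_sub_smul_one l T ▸ mem_image_of_mem _ hz)

theorem isBounded_numRange (T : H →L[ℂ] H) : Bornology.IsBounded (numRange T) :=
  isBounded_iff_forall_norm_le.2 ⟨‖T‖, fun _ => norm_le_of_mem_numRange⟩

theorem mem_numRange_of_inner_apply_eq {S : H →L[ℂ] H} {v : H} (hv : v ≠ 0) {c : ℂ}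
    (h : ⟪v, S v⟫_ℂ = c * (‖v‖ ^ 2 : ℝ)) : c ∈ numRange S := by
  refine ⟨(‖v‖⁻¹ : ℂ) • v, norm_smul_inv_norm hv, ?_⟩
  have : (‖v‖ : ℂ) ≠ 0 := by exact_mod_cast norm_ne_zero_iff.2 hv
  rw [map_smul, inner_smul_left, inner_smul_right, h]
  simp only [map_inv₀, Complex.conj_ofReal, Complex.ofReal_pow]
  field_simp

theorem exists_ne_zero_im_mul_eq_zero (d : ℂ) : ∃ e : ℂ, e ≠ 0 ∧ (e * d).im = 0 := by
  rcases eq_or_ne d 0 with rfl | hd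
  · exact ⟨1, one_ne_zero, by simp⟩
  · refine ⟨conj d, (map_ne_zero _).2 hd, ?_⟩
    simp only [Complex.mul_im, Complex.conj_re, Complex.conj_im]
    ring

theorem smul_add_smul_ne_zero {S : H →L[ℂ] H} {x w : H} (hx : x ≠ 0) (hxS : ⟪x, S x⟫_ℂ = 0)
    (hwS : ⟪w, S w⟫_ℂ ≠ 0) {a b : ℂ} (hab : a ≠ 0 ∨ b ≠ 0) : a • x + b • w ≠ 0 := by
  intro h
  have hbw : b • w = -(a • x) := eq_neg_of_add_eq_zero_right h
  have hq := congrArg (fun v => ⟪v, S v⟫_ℂ) hbw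
  simp only [map_neg, map_smul, inner_neg_left, inner_neg_right, inner_smul_left,
    inner_smul_right, hxS] at hq
  have hb : b = 0 := by simpa [hwS] using hq
  subst hb
  rw [zero_smul, add_zero, smul_eq_zero] at h
  tauto

theorem im_inner_apply_real_combination {S : H →L[ℂ] H} {x w : H}
    (hx : (⟪x, S x⟫_ℂ).im = 0) (hw : (⟪w, S w⟫_ℂ).im = 0)
    (hxw : (⟪x, S w⟫_ℂ + ⟪w, S x⟫_ℂ).im = 0) (a b : ℝ) :
    (⟪(a : ℂ) • x + (b : ℂ) • w, S ((a : ℂ) • x + (b : ℂ) • w)⟫_ℂ).im = 0 := by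
  simp only [map_add, map_smul, inner_add_left, inner_add_right, inner_smul_left,
    inner_smul_right, Complex.conj_ofReal, Complex.add_im, Complex.im_ofReal_mul] at hxw ⊢
  linear_combination a * a * hx + b * b * hw + a * b * hxw

theorem exists_smul_im_inner_apply_add_eq_zero (S : H →L[ℂ] H) (x y : H) :
    ∃ e : ℂ, e ≠ 0 ∧ (⟪x, S (e • y)⟫_ℂ + ⟪e • y, S x⟫_ℂ).im = 0 := by
  obtain ⟨e, he, hde⟩ := exists_ne_zero_im_mul_eq_zero (⟪x, S y⟫_ℂ - conj ⟪y, S x⟫_ℂ)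
  refine ⟨e, he, ?_⟩
  rw [map_smul, inner_smul_right, inner_smul_left]
  simp only [Complex.add_im, Complex.mul_im, Complex.sub_im, Complex.sub_re, Complex.conj_re,
    Complex.conj_im] at hde ⊢
  linarith

theorem ofReal_mem_numRange_of_zero_mem_of_one_mem {S : H →L[ℂ] H} (h0 : (0 : ℂ) ∈ numRange S)
    (h1 : (1 : ℂ) ∈ numRange S) {t : ℝ} (ht : t ∈ Icc (0 : ℝ) 1) : (t : ℂ) ∈ numRange S := by
  obtain ⟨x, hx, hxS⟩ := h0
  obtain ⟨y, hy, hyS⟩ := h1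
  obtain ⟨e, he, hxw⟩ := exists_smul_im_inner_apply_add_eq_zero S x y
  set w := e • y
  have hx0 : x ≠ 0 := norm_ne_zero_iff.1 (by simp [hx])
  have hw0 : w ≠ 0 := smul_ne_zero he (norm_ne_zero_iff.1 (by simp [hy]))
  have hwS : ⟪w, S w⟫_ℂ = ((‖w‖ ^ 2 : ℝ) : ℂ) := by
    rw [map_smul, inner_smul_left, inner_smul_right, hyS, norm_smul, hy, mul_one, mul_one,
      Complex.conj_mul']
    push_cast; rfl
  -- along the path from `x` to `w`, which stays in their real span, `⟪v, S v⟫` is real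
  let γ : ℝ → H := fun s => ((1 - s : ℝ) : ℂ) • x + (s : ℂ) • w
  have hγ : ∀ s, γ s ≠ 0 := fun s => by
    refine smul_add_smul_ne_zero hx0 hxS (by simpa [hwS]) ?_
    rcases eq_or_ne s 0 with rfl | hs
    · simp
    · exact Or.inr (Complex.ofReal_ne_zero.2 hs)
  have hγS : ∀ s, ⟪γ s, S (γ s)⟫_ℂ = ((⟪γ s, S (γ s)⟫_ℂ).re : ℂ) := fun s =>
    Complex.ext rfl <|
      im_inner_apply_real_combination (by simp [hxS]) (by rw [hwS, Complex.ofReal_im]) hxw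
        (1 - s) s
  let f : ℝ → ℝ := fun s => (⟪γ s, S (γ s)⟫_ℂ).re / ‖γ s‖ ^ 2
  have hf : ContinuousOn f (Icc 0 1) :=
    (by fun_prop : Continuous fun s => (⟪γ s, S (γ s)⟫_ℂ).re).continuousOn.div (by fun_prop)
      fun s _ => pow_ne_zero 2 (norm_ne_zero_iff.2 (hγ s))
  have hf0 : f 0 = 0 := by simp [f, γ, hxS]
  have hf1 : f 1 = 1 := by
    have : γ 1 = w := by simp [γ]
    simp only [f, this, hwS, Complex.ofReal_re]
    exact div_self (pow_ne_zero 2 (norm_ne_zero_iff.2 hw0))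
  obtain ⟨s, -, hs⟩ := intermediate_value_Icc zero_le_one hf (by rwa [hf0, hf1])
  refine mem_numRange_of_inner_apply_eq (hγ s) ?_
  rw [hγS, ← hs, ← Complex.ofReal_mul,
    div_mul_cancel₀ _ (pow_ne_zero 2 (norm_ne_zero_iff.2 (hγ s)))]

theorem convex_numRange (T : H →L[ℂ] H) : Convex ℝ (numRange T) := by
  intro α hα β hβ a b ha hb hab
  rcases eq_or_ne α β with rfl | hne
  · rwa [Convex.combo_self hab]
  have hd : β - α ≠ 0 := sub_ne_zero.2 hne.symm
  have hW : numRange ((β - α)⁻¹ • (T - α • 1)) = (fun z => (β - α)⁻¹ * (z - α)) '' numRange T := by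
    rw [numRange_smul, numRange_sub_smul_one, image_image]
  obtain ⟨z, hz, hzb⟩ : (b : ℂ) ∈ (fun z => (β - α)⁻¹ * (z - α)) '' numRange T :=
    hW ▸ ofReal_mem_numRange_of_zero_mem_of_one_mem (hW ▸ ⟨α, hα, by simp⟩)
      (hW ▸ ⟨β, hβ, inv_mul_cancel₀ hd⟩) ⟨hb, by linarith⟩
  convert hz using 1
  rw [eq_sub_of_add_eq hab, Complex.real_smul, Complex.real_smul]
  push_cast
  rw [← hzb]
  field_simp
  ring

theorem mem_closure_numRange_of_forall_norm_sub_le (T : H →L[ℂ] H) {z : ℂ}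
    (h : ∀ l : ℂ, ‖z - l‖ ≤ ‖T - l • 1‖) : z ∈ closure (numRange T) := by
  have : Nontrivial H := not_subsingleton_iff_nontrivial.1 fun _ => by
    have := h (z - 1)
    norm_num [Subsingleton.elim (T - (z - 1) • 1) 0] at this
  by_contra hz
  obtain ⟨f, u, hK, hu⟩ := RCLike.geometric_hahn_banach_closed_point (𝕜 := ℂ)
    (convex_numRange T).closure isClosed_closure hz
  have hδ : 0 < (f z).re - u := sub_pos.2 hu
  -- `f` is multiplication by `f 1`; the disc centred at `-c`, far behind the separating line,
  -- contains `numRange T` but not `z`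
  set t : ℝ := (‖T‖ ^ 2 + 1) / ((f z).re - u)
  set c : ℂ := t * conj (f 1)
  have hc : ∀ w : ℂ, (c * conj w).re = t * (f w).re := fun w => by
    have hf : f w = w * f 1 := by simpa using f.map_smul w 1
    rw [show c * conj w = t * conj (f w) by rw [hf, map_mul]; ring, Complex.re_ofReal_mul,
      Complex.conj_re]
  set M := ‖T‖ ^ 2 + 2 * (t * u) + ‖c‖ ^ 2
  have hT : ∀ x : H, ‖x‖ = 1 → ‖(T - (-c) • 1) x‖ ^ 2 ≤ M := fun x hx => by
    have hTx : ‖T x‖ ≤ ‖T‖ := by simpa [hx] using T.le_opNorm x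
    have hfx : t * (f ⟪x, T x⟫_ℂ).re ≤ t * u :=
      mul_le_mul_of_nonneg_left (hK _ (subset_closure ⟨x, hx, rfl⟩)).le (by positivity)
    have : (T - (-c) • 1) x = T x + c • x := by simp [sub_eq_add_neg]
    rw [this, norm_add_smul_sq _ hx, RCLike.re_to_complex, ← inner_conj_symm, hc]
    linarith [pow_le_pow_left₀ (norm_nonneg _) hTx 2]
  have hz : M < ‖z - (-c)‖ ^ 2 := by
    have hz1 : z - (-c) = z + c • (1 : ℂ) := by simp
    rw [hz1, norm_add_smul_sq _ norm_one, RCLike.re_to_complex, RCLike.inner_apply, one_mul, hc]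
    have : t * ((f z).re - u) = ‖T‖ ^ 2 + 1 := div_mul_cancel₀ _ hδ.ne'
    nlinarith [sq_nonneg ‖z‖]
  obtain ⟨x₀, hx₀⟩ := exists_norm_eq H zero_le_one
  have hM : 0 ≤ M := (sq_nonneg _).trans (hT x₀ hx₀)
  have hle : ‖z - (-c)‖ ≤ √M := (h (-c)).trans <|
    opNorm_le_of_unit_norm (Real.sqrt_nonneg _) fun x hx => Real.le_sqrt_of_sq_le (hT x hx)
  nlinarith [Real.sq_sqrt hM, pow_le_pow_left₀ (norm_nonneg _) hle 2]

end NumericalRange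

section PartialIsometry

variable {𝕜 E : Type*} [RCLike 𝕜] [NormedAddCommGroup E] [InnerProductSpace 𝕜 E] [CompleteSpace E]

def IsPartialIsometry (V : E →L[𝕜] E) : Prop :=
  V * adjoint V * V = V

namespace IsPartialIsometry

variable {V : E →L[𝕜] E}

theorem apply_sub_adjoint_apply (hV : IsPartialIsometry V) (x : E) :
    V (x - adjoint V (V x)) = 0 := by
  rw [map_sub, sub_eq_zero]
  exact (congrArg (· x) hV).symm

theorem norm_sq_add_norm_sub_sq (hV : IsPartialIsometry V) (x : E) :
    ‖V x‖ ^ 2 + ‖x - adjoint V (V x)‖ ^ 2 = ‖x‖ ^ 2 := by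
  set p := adjoint V (V x)
  have hpq : inner 𝕜 p (x - p) = 0 := by
    rw [adjoint_inner_left, hV.apply_sub_adjoint_apply, inner_zero_right]
  have hVp : inner 𝕜 (V x) (V x) = inner 𝕜 p p := by
    rw [← adjoint_inner_right, ← sub_eq_zero]
    show inner 𝕜 x p - inner 𝕜 p p = 0
    rw [← inner_sub_left, ← inner_conj_symm, hpq, map_zero]
  rw [inner_self_eq_norm_sq_to_K, inner_self_eq_norm_sq_to_K] at hVp
  have hx : ‖x‖ ^ 2 = ‖p‖ ^ 2 + ‖x - p‖ ^ 2 := by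
    conv_lhs => rw [← add_sub_cancel p x]
    rw [norm_add_sq (𝕜 := 𝕜), hpq, map_zero, mul_zero, add_zero]
  rw [hx, (by exact_mod_cast hVp : ‖V x‖ ^ 2 = ‖p‖ ^ 2)]

theorem norm_apply_le (hV : IsPartialIsometry V) (x : E) : ‖V x‖ ≤ ‖x‖ :=
  pow_le_pow_iff_left₀ (norm_nonneg _) (norm_nonneg _) two_ne_zero |>.1 <|
    (hV.norm_sq_add_norm_sub_sq x) ▸ le_add_of_nonneg_right (sq_nonneg _)

theorem adjoint (hV : IsPartialIsometry V) : IsPartialIsometry (adjoint V) := by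
  simpa [IsPartialIsometry, ← star_eq_adjoint, star_mul, mul_assoc] using congrArg star hV

end IsPartialIsometry

end PartialIsometry

namespace PolarDecomp

variable {H : Type*} [NormedAddCommGroup H] [InnerProductSpace ℂ H] [CompleteSpace H]
  {T : H →L[ℂ] H} (P : PolarDecomp T)

theorem isPartialIsometry_V : IsPartialIsometry P.V :=
  P.partIso

theorem norm_R_apply (x : H) : ‖P.R x‖ = ‖T x‖ := by
  have h : ⟪P.R x, P.R x⟫_ℂ = ⟪T x, T x⟫_ℂ := by
    rw [← P.posR.isSelfAdjoint.adjoint_eq, adjoint_inner_left, P.posR.isSelfAdjoint.adjoint_eq,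
      ← mul_apply_eq_comp P.R P.R x, P.sqR, mul_apply_eq_comp, adjoint_inner_right]
  rw [inner_self_eq_norm_sq_to_K, inner_self_eq_norm_sq_to_K] at h
  exact (pow_left_inj₀ (norm_nonneg _) (norm_nonneg _) two_ne_zero).1 (by exact_mod_cast h)

theorem apply_sub_adjoint_V_apply (x : H) : T (x - adjoint P.V (P.V x)) = 0 := by
  have : x - adjoint P.V (P.V x) ∈ LinearMap.ker (P.V : H →ₗ[ℂ] H) :=
    P.isPartialIsometry_V.apply_sub_adjoint_apply x
  rwa [P.kerV] at this

theorem adjoint_V_apply_V_apply_R (y : H) : adjoint P.V (P.V (P.R y)) = P.R y := by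
  set q := P.R y - adjoint P.V (P.V (P.R y))
  have hRq : P.R q = 0 := by
    rw [← norm_eq_zero, norm_R_apply, apply_sub_adjoint_V_apply, norm_zero]
  have : ⟪q, q⟫_ℂ = 0 := by
    rw [inner_sub_left, ← P.posR.isSelfAdjoint.adjoint_eq, adjoint_inner_left, adjoint_inner_left,
      P.posR.isSelfAdjoint.adjoint_eq, hRq, P.isPartialIsometry_V.apply_sub_adjoint_apply]
    simp
  exact (sub_eq_zero.1 (inner_self_eq_zero.1 this)).symm

theorem R_mul_V_sub_smul_one_apply (l : ℂ) (x : H) :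
    (P.R * P.V - l • 1) x =
      adjoint P.V ((T - l • 1) (P.V x)) + (T - l • 1) (x - adjoint P.V (P.V x)) := by
  have hT : T (P.V x) = P.V (P.R (P.V x)) := congrArg (· (P.V x)) P.factor
  rw [sub_apply T _ (x - _), P.apply_sub_adjoint_V_apply]
  simp only [sub_apply, smul_apply, one_apply_eq_self, mul_apply_eq_comp, map_sub, map_smul, hT,
    P.adjoint_V_apply_V_apply_R]
  module

theorem norm_R_mul_V_sub_smul_one_le (l : ℂ) : ‖P.R * P.V - l • 1‖ ≤ ‖T - l • 1‖ := by
  refine opNorm_le_bound _ (norm_nonneg _) fun x => ?_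
  set X := T - l • 1
  set q := x - adjoint P.V (P.V x)
  have hXq : P.V (X q) = 0 := by
    simp [X, q, P.apply_sub_adjoint_V_apply, P.isPartialIsometry_V.apply_sub_adjoint_apply]
  have horth : ⟪adjoint P.V (X (P.V x)), X q⟫_ℂ = 0 := by
    rw [adjoint_inner_left, hXq, inner_zero_right]
  have h1 : ‖adjoint P.V (X (P.V x))‖ ≤ ‖X‖ * ‖P.V x‖ :=
    (P.isPartialIsometry_V.adjoint.norm_apply_le _).trans (X.le_opNorm _)
  have h2 : ‖X q‖ ≤ ‖X‖ * ‖q‖ := X.le_opNorm q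
  have hx := P.isPartialIsometry_V.norm_sq_add_norm_sub_sq x
  rw [R_mul_V_sub_smul_one_apply, ← pow_le_pow_iff_left₀ (norm_nonneg _) (by positivity)
    two_ne_zero, norm_add_sq (𝕜 := ℂ), horth, mul_pow, ← hx]
  simp only [map_zero, mul_zero, add_zero]
  nlinarith [pow_le_pow_left₀ (norm_nonneg _) h1 2, pow_le_pow_left₀ (norm_nonneg _) h2 2]

theorem norm_mean_sub_smul_one_le (l : ℂ) : ‖P.mean - l • 1‖ ≤ ‖T - l • 1‖ := by
  have h : P.mean - l • 1 = (2⁻¹ : ℂ) • ((T - l • 1) + (P.R * P.V - l • 1)) := by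
    rw [PolarDecomp.mean, ← P.factor]
    module
  rw [h, norm_smul, norm_inv, Complex.norm_ofNat]
  linarith [norm_add_le (T - l • 1) (P.R * P.V - l • 1), P.norm_R_mul_V_sub_smul_one_le l]

end PolarDecomp

theorem sSup_norm_image_le_of_subset_closure {E : Type*} [SeminormedAddCommGroup E] {s t : Set E}
    (ht : Bornology.IsBounded t) (hst : s ⊆ closure t) :
    sSup ((fun z : E => ‖z‖) '' s) ≤ sSup ((fun z : E => ‖z‖) '' t) := by
  obtain ⟨C, hC⟩ := isBounded_iff_forall_norm_le.1 ht
  have hbdd : BddAbove ((fun z : E => ‖z‖) '' t) := ⟨C, forall_mem_image.2 hC⟩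
  have hclosure : closure t ⊆ {z | ‖z‖ ≤ sSup ((fun z : E => ‖z‖) '' t)} :=
    closure_minimal (fun z hz => le_csSup hbdd (mem_image_of_mem _ hz))
      (isClosed_le continuous_norm continuous_const)
  exact Real.sSup_le (forall_mem_image.2 fun z hz => hclosure (hst hz))
    (Real.sSup_nonneg (forall_mem_image.2 fun z _ => norm_nonneg z))

theorem mean_transform_numerical_range {H : Type*} [NormedAddCommGroup H]
    [InnerProductSpace ℂ H] [CompleteSpace H] (T : H →L[ℂ] H) (P : PolarDecomp T) :
    closure (numRange P.mean) ⊆ closure (numRange T) ∧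
      sSup ((fun z : ℂ => ‖z‖) '' numRange P.mean) ≤ sSup ((fun z : ℂ => ‖z‖) '' numRange T) := by
  have hsub : numRange P.mean ⊆ closure (numRange T) := fun z hz =>
    mem_closure_numRange_of_forall_norm_sub_le T fun l =>
      (norm_sub_le_of_mem_numRange hz l).trans (P.norm_mean_sub_smul_one_le l)
  exact ⟨closure_minimal hsub isClosed_closure,
    sSup_norm_image_le_of_subset_closure (isBounded_numRange T) hsub⟩
end

section
/- Let W_α be a unilateral weighted shift on ℓ²(ℕ) with strictly positive bounded weight sequence α = (α_i). Then the spectral radius satisfies r(W_α) ≤ r(Ŵ_α), where Ŵ_α is the weighted shift with weights ((α_i + α_{i+1})/2). -/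
/-!
`W ^ (n + 1)` maps `e_k` to `α_k ⋯ α_{k+n} e_{k+n+1}`, so `‖W ^ (n + 1)‖` is the supremum of these
products over `k`. Squaring such a product and pairing `α_{k+i}` with `α_{k+i+1}`, AM–GM gives
`α_k ⋯ α_{k+n} ≤ ‖W‖ · β_k ⋯ β_{k+n-1}` for the mean weights `β_i = (α_i + α_{i+1}) / 2`, hence
`‖W ^ (n + 1)‖ ≤ ‖W‖ ‖Ŵ ^ n‖`. Gelfand's formula turns this into `r(W) ≤ r(Ŵ)`.
-/

open Filter Topology Finset
open scoped ENNReal NNReal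

section WeightedShift

variable {𝕜 : Type*} [NontriviallyNormedField 𝕜] {p : ℝ≥0∞} [Fact (1 ≤ p)]

def IsWeightedShift (m : ℕ) (c : ℕ → 𝕜) (T : lp (fun _ : ℕ => 𝕜) p →L[𝕜] lp (fun _ : ℕ => 𝕜) p) :
    Prop :=
  ∀ k, T (lp.single p k 1) = c k • lp.single p (k + m) 1

namespace IsWeightedShift

variable {m : ℕ} {c : ℕ → 𝕜} {T : lp (fun _ : ℕ => 𝕜) p →L[𝕜] lp (fun _ : ℕ => 𝕜) p}

theorem hasSum_apply (hT : IsWeightedShift m c T) (hp : p ≠ ⊤) (x : lp (fun _ : ℕ => 𝕜) p)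
    (j : ℕ) :
    HasSum (fun k => x k * c k * lp.single (E := fun _ : ℕ => 𝕜) p (k + m) 1 j) (T x j) := by
  have hsum : HasSum (fun k => T (lp.single p k (x k)) j) (T x j) :=
    ((lp.hasSum_single hp x).mapL T).mapL (lp.evalCLM 𝕜 _ p j)
  have hterm : ∀ k, T (lp.single p k (x k)) j =
      x k * c k * lp.single (E := fun _ : ℕ => 𝕜) p (k + m) 1 j := fun k => by
    rw [← mul_one (x k), ← smul_eq_mul, lp.single_smul, map_smul, hT k]
    simp only [lp.coeFn_smul, Pi.smul_apply, smul_eq_mul, one_mul, mul_assoc]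
  simpa only [hterm] using hsum

theorem apply_add (hT : IsWeightedShift m c T) (hp : p ≠ ⊤) (x : lp (fun _ : ℕ => 𝕜) p)
    (j : ℕ) : T x (j + m) = c j * x j := by
  refine ((hT.hasSum_apply hp x (j + m)).unique (hasSum_single j fun k hk => ?_)).trans ?_
  · rw [lp.single_apply_ne p _ _ (by omega), mul_zero]
  · rw [lp.single_apply_self, mul_one, mul_comm]

theorem apply_of_lt (hT : IsWeightedShift m c T) (hp : p ≠ ⊤) (x : lp (fun _ : ℕ => 𝕜) p)
    {j : ℕ} (hj : j < m) : T x j = 0 := by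
  refine (hT.hasSum_apply hp x j).unique ?_
  convert hasSum_zero with k
  rw [lp.single_apply_ne p _ _ (by omega), mul_zero]

theorem norm_le_opNorm (hT : IsWeightedShift m c T) (k : ℕ) : ‖c k‖ ≤ ‖T‖ := by
  have hp : 0 < p := zero_lt_one.trans_le Fact.out
  simpa [hT k, norm_smul, lp.norm_single hp] using T.le_opNorm (lp.single p k 1)

theorem opNorm_le (hT : IsWeightedShift m c T) (hp : p ≠ ⊤) {M : ℝ} (hM : ∀ k, ‖c k‖ ≤ M) :
    ‖T‖ ≤ M := by
  have hp' : 0 < p.toReal := ENNReal.toReal_pos (zero_lt_one.trans_le Fact.out).ne' hp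
  have hM0 : 0 ≤ M := (norm_nonneg _).trans (hM 0)
  refine T.opNorm_le_bound hM0 fun x => ?_
  have hshift : HasSum (fun j => ‖T x (j + m)‖ ^ p.toReal) (‖T x‖ ^ p.toReal) := by
    have h := (hasSum_nat_add_iff' m).mpr (lp.hasSum_norm hp' (T x))
    rwa [sum_eq_zero fun j hj => by simp [hT.apply_of_lt hp x (mem_range.mp hj), hp'.ne'],
      sub_zero] at h
  have hle : ‖T x‖ ^ p.toReal ≤ (M * ‖x‖) ^ p.toReal := by
    rw [Real.mul_rpow hM0 (norm_nonneg _)]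
    refine hasSum_le (fun j => ?_) hshift ((lp.hasSum_norm hp' x).mul_left _)
    rw [hT.apply_add hp, norm_mul, Real.mul_rpow (norm_nonneg _) (norm_nonneg _)]
    gcongr
    exact hM j
  exact (Real.rpow_le_rpow_iff (norm_nonneg _) (by positivity) hp').mp hle

theorem pow {w : ℕ → 𝕜} (hT : IsWeightedShift 1 w T) (n : ℕ) :
    IsWeightedShift n (fun k => ∏ i ∈ range n, w (k + i)) (T ^ n) := by
  induction n with
  | zero => intro k; simp
  | succ n ih =>
    intro k
    rw [pow_succ', mul_apply_eq_comp, ih k, map_smul, hT, smul_smul]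
    dsimp only
    rw [prod_range_succ, mul_comm, add_assoc]

end IsWeightedShift

end WeightedShift

theorem sq_prod_range_succ_le_mul_sq_prod_mean {a : ℕ → ℝ} (ha : ∀ i, 0 ≤ a i) (n : ℕ) :
    (∏ i ∈ range (n + 1), a i) ^ 2 ≤ a 0 * a n * (∏ i ∈ range n, (a i + a (i + 1)) / 2) ^ 2 := by
  have hsplit : (∏ i ∈ range (n + 1), a i) ^ 2 = a 0 * a n * ∏ i ∈ range n, a i * a (i + 1) := by
    rw [sq]
    nth_rewrite 1 [prod_range_succ]
    rw [prod_range_succ', prod_mul_distrib]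
    ring
  rw [hsplit, ← prod_pow]
  refine mul_le_mul_of_nonneg_left (prod_le_prod (fun i _ => mul_nonneg (ha i) (ha (i + 1)))
    fun i _ => ?_) (mul_nonneg (ha 0) (ha n))
  nlinarith [sq_nonneg (a i - a (i + 1))]

theorem prod_range_succ_le_mul_prod_mean {a : ℕ → ℝ} (ha : ∀ i, 0 ≤ a i) {M : ℝ}
    (hM : ∀ i, a i ≤ M) (n : ℕ) :
    ∏ i ∈ range (n + 1), a i ≤ M * ∏ i ∈ range n, (a i + a (i + 1)) / 2 := by
  have hM0 : 0 ≤ M := (ha 0).trans (hM 0)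
  have hmean : 0 ≤ ∏ i ∈ range n, (a i + a (i + 1)) / 2 :=
    prod_nonneg fun i _ => by linarith [ha i, ha (i + 1)]
  refine (pow_le_pow_iff_left₀ (prod_nonneg fun i _ => ha i) (mul_nonneg hM0 hmean)
    two_ne_zero).mp ?_
  calc (∏ i ∈ range (n + 1), a i) ^ 2
      ≤ a 0 * a n * (∏ i ∈ range n, (a i + a (i + 1)) / 2) ^ 2 :=
        sq_prod_range_succ_le_mul_sq_prod_mean ha n
    _ ≤ M * M * (∏ i ∈ range n, (a i + a (i + 1)) / 2) ^ 2 :=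
        mul_le_mul_of_nonneg_right (mul_le_mul (hM 0) (hM n) (ha n) hM0) (sq_nonneg _)
    _ = (M * ∏ i ∈ range n, (a i + a (i + 1)) / 2) ^ 2 := by ring

theorem NNReal.le_of_eventually_pow_succ_le_mul_pow {s t C : ℝ≥0}
    (h : ∀ᶠ n in atTop, s ^ (n + 1) ≤ C * t ^ n) : s ≤ t := by
  by_contra! hts
  have hs : 0 < s := pos_of_gt hts
  have hlim : Tendsto (fun n => C * (t / s) ^ n) atTop (𝓝 0) := by
    simpa using (NNReal.tendsto_pow_atTop_nhds_zero_of_lt_one ((div_lt_one hs).2 hts)).const_mul C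
  obtain ⟨n, hn, hlt⟩ := (h.and (hlim.eventually_lt_const hs)).exists
  refine hn.not_gt ?_
  calc C * t ^ n = C * (t / s) ^ n * s ^ n := by
        rw [div_pow, mul_assoc, div_mul_cancel₀ _ (by positivity)]
    _ < s * s ^ n := by gcongr
    _ = s ^ (n + 1) := (pow_succ' s n).symm

namespace spectrum

variable {A : Type*} [NormedRing A]

theorem spectralRadius_le_nnnorm_mul_nnnorm_one {𝕜 : Type*} [NormedField 𝕜] [NormedAlgebra 𝕜 A]
    [CompleteSpace A] (a : A) : spectralRadius 𝕜 a ≤ ‖a‖₊ * ‖(1 : A)‖₊ := by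
  simpa using spectralRadius_le_pow_nnnorm_pow_one_div 𝕜 a 0

variable [NormedAlgebra ℂ A] [CompleteSpace A]

theorem eventually_nnnorm_pow_le (a : A) {t : ℝ≥0} (ht : spectralRadius ℂ a < t) :
    ∀ᶠ n in atTop, ‖a ^ n‖₊ ≤ t ^ n := by
  filter_upwards [(pow_nnnorm_pow_one_div_tendsto_nhds_spectralRadius a).eventually_lt_const ht,
    eventually_ge_atTop 1] with n hn hn1
  rw [one_div, ENNReal.rpow_inv_lt_iff (by positivity), ENNReal.rpow_natCast] at hn
  exact_mod_cast hn.le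

theorem spectralRadius_le_of_norm_pow_succ_le (a b : A) (C : ℝ≥0)
    (h : ∀ n, ‖a ^ (n + 1)‖ ≤ C * ‖b ^ n‖) : spectralRadius ℂ a ≤ spectralRadius ℂ b := by
  refine le_of_forall_gt_imp_ge_of_dense fun c hc => ?_
  obtain ⟨t, hbt, htc⟩ := ENNReal.lt_iff_exists_nnreal_btwn.mp hc
  have hs : ((spectralRadius ℂ a).toNNReal : ℝ≥0∞) = spectralRadius ℂ a := ENNReal.coe_toNNReal
    (ne_top_of_le_ne_top ENNReal.coe_ne_top (spectralRadius_le_nnnorm_mul_nnnorm_one (𝕜 := ℂ) a))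
  set s := (spectralRadius ℂ a).toNNReal
  suffices hst : s ≤ t by
    rw [← hs]
    exact (ENNReal.coe_le_coe.mpr hst).trans htc.le
  refine NNReal.le_of_eventually_pow_succ_le_mul_pow (C := ‖(1 : A)‖₊ * C) ?_
  filter_upwards [eventually_nnnorm_pow_le b hbt] with n hn
  have hpow : (s : ℝ≥0∞) ^ (n + 1) ≤ ‖a ^ (n + 1)‖₊ * ‖(1 : A)‖₊ :=
    hs ▸ (spectralRadius_pow_le a (n + 1) n.succ_ne_zero).trans
      (spectralRadius_le_nnnorm_mul_nnnorm_one _)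
  calc s ^ (n + 1) ≤ ‖a ^ (n + 1)‖₊ * ‖(1 : A)‖₊ := mod_cast hpow
    _ ≤ C * ‖b ^ n‖₊ * ‖(1 : A)‖₊ := by gcongr; exact_mod_cast h n
    _ ≤ ‖(1 : A)‖₊ * C * t ^ n := by rw [mul_comm, ← mul_assoc]; gcongr

end spectrum

theorem Complex.norm_prod_ofReal_of_nonneg {ι : Type*} {s : Finset ι} {x : ι → ℝ}
    (hx : ∀ i ∈ s, 0 ≤ x i) : ‖∏ i ∈ s, (x i : ℂ)‖ = ∏ i ∈ s, x i := by
  rw [← Complex.ofReal_prod, Complex.norm_of_nonneg (prod_nonneg hx)]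

theorem spectral_radius_le_mean_transform
    (α : ℕ → ℝ) (hpos : ∀ i, 0 < α i)
    (W What : lp (fun _ : ℕ => ℂ) 2 →L[ℂ] lp (fun _ : ℕ => ℂ) 2)
    (hW : ∀ i : ℕ, W (lp.single 2 i 1) = (α i : ℂ) • lp.single 2 (i + 1) 1)
    (hWhat : ∀ i : ℕ, What (lp.single 2 i 1) =
      (((α i + α (i + 1)) / 2 : ℝ) : ℂ) • lp.single 2 (i + 1) 1) :
    spectralRadius ℂ W ≤ spectralRadius ℂ What := by
  have hα : ∀ i, 0 ≤ α i := fun i => (hpos i).le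
  have hW' : IsWeightedShift 1 (fun i => (α i : ℂ)) W := hW
  have hWhat' : IsWeightedShift 1 (fun i => (((α i + α (i + 1)) / 2 : ℝ) : ℂ)) What := hWhat
  have hαW : ∀ i, α i ≤ ‖W‖ := fun i => by
    simpa [abs_of_nonneg (hα i)] using hW'.norm_le_opNorm i
  refine spectrum.spectralRadius_le_of_norm_pow_succ_le W What ‖W‖₊ fun n => ?_
  refine (hW'.pow (n + 1)).opNorm_le ENNReal.ofNat_ne_top fun k => ?_
  calc ‖∏ i ∈ range (n + 1), (α (k + i) : ℂ)‖ = ∏ i ∈ range (n + 1), α (k + i) :=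
        Complex.norm_prod_ofReal_of_nonneg fun i _ => hα _
    _ ≤ ‖W‖ * ∏ i ∈ range n, (α (k + i) + α (k + i + 1)) / 2 :=
        prod_range_succ_le_mul_prod_mean (fun i => hα _) (fun i => hαW _) n
    _ ≤ ‖W‖₊ * ‖What ^ n‖ := by
        rw [coe_nnnorm]
        gcongr
        rw [← Complex.norm_prod_ofReal_of_nonneg fun i _ => by
          linarith [hα (k + i), hα (k + i + 1)]]
        exact (hWhat'.pow n).norm_le_opNorm k
end
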